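/- Let G be a connected d-transmission-regular finite simple graph on n ≥ 2 vertices (i.e., every row sum of its distance matrix D equals d), and let λ̃_1 ≥ λ̃_2 ≥ ... ≥ λ̃_n be the eigenvalues of D. Let t ≥ 1 be an integer. If tn − d + λ̃_2 > 0, then eq_t(G) ≤ (λ̃_2 + t)n / (tn − d + λ̃_2). If tn − d + λ̃_n < 0, then eq_t(G) ≤ (λ̃_n + t)n / (tn − d + λ̃_n). -/

import Mathlib

open SimpleGraph

/-- `S` is a `t`-equidistant set of `G`: all distinct vertices of `S` are at distance
exactly `t` in `G`. -/
def IsEquidistantSet {V : Type*} (G : SimpleGraph V) (t : ℕ) (S : Finset V) : Prop :=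
  (S : Set V).Pairwise fun u v => G.dist u v = t

/-- The `t`-equidistant number of `G`: the maximum size of a `t`-equidistant set. -/
noncomputable def eqNum {V : Type*} [Fintype V] (G : SimpleGraph V) (t : ℕ) : ℕ :=
  sSup {n : ℕ | ∃ S : Finset V, IsEquidistantSet G t S ∧ S.card = n}

/-- `S` is a `t`-independent set of `G`: all distinct vertices of `S` are at pairwise
distance greater than `t` in `G`. -/
def IsTIndepSet {V : Type*} (G : SimpleGraph V) (t : ℕ) (S : Finset V) : Prop :=
  (S : Set V).Pairwise fun u v => t < G.dist u v

/-- The `t`-independence number of `G`. -/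
noncomputable def indepNumT {V : Type*} [Fintype V] (G : SimpleGraph V) (t : ℕ) : ℕ :=
  sSup {n : ℕ | ∃ S : Finset V, IsTIndepSet G t S ∧ S.card = n}

/-- The equidistant number of `G`: `max {eq_t(G) : 1 ≤ t ≤ diam G}`. -/
noncomputable def eqTotalNum {V : Type*} [Fintype V] (G : SimpleGraph V) : ℕ :=
  (Finset.Icc 1 G.diam).sup (eqNum G)

/-- The distance matrix of `G`, as a real matrix. -/
noncomputable def distMatrix {V : Type*} (G : SimpleGraph V) : Matrix V V ℝ :=
  Matrix.of fun u v => (G.dist u v : ℝ)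

/-!
Let `S` be a maximum `t`-equidistant set, `s = |S|`, and `y = n·1_S - s·1`, which is orthogonal
to the all-ones vector `1`. Since `D` is nonnegative with all row sums `d`, `1` is an eigenvector
for the largest eigenvalue `d`, so on `1^⊥` the quadratic form of `D` is squeezed between
`λ̃_n ‖y‖²` and `λ̃_2 ‖y‖²`. Now `yᵀDy = ns(nt(s-1) - sd)` and `yᵀy = ns(n-s)`; dividing by `ns`
gives `λ̃_n (n-s) ≤ nt(s-1) - sd ≤ λ̃_2 (n-s)`, which rearranges to the two bounds.
-/

open Matrix Finset

section LinearAlgebra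

variable {V : Type*} [Fintype V]

lemma Matrix.mulVec_one_eq_smul_one {A : Matrix V V ℝ} {r : ℝ}
    (hrow : ∀ u, ∑ v, A u v = r) : A *ᵥ 1 = r • 1 := by
  ext u
  simp [mulVec, dotProduct, hrow u]

lemma Matrix.IsSymm.dotProduct_mulVec_sub_smul_one {A : Matrix V V ℝ} (hA : A.IsSymm) {r : ℝ}
    (hrow : ∀ u, ∑ v, A u v = r) (x : V → ℝ) (c : ℝ) :
    (x - c • 1) ⬝ᵥ (A *ᵥ (x - c • 1))
      = x ⬝ᵥ (A *ᵥ x) - 2 * c * r * ∑ v, x v + c ^ 2 * r * Fintype.card V := by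
  have hA1 := mulVec_one_eq_smul_one hrow
  have h1Ax : 1 ⬝ᵥ (A *ᵥ x) = r * ∑ v, x v := by
    rw [dotProduct_mulVec, ← mulVec_transpose, hA.eq, hA1, smul_dotProduct, one_dotProduct,
      smul_eq_mul]
  simp only [mulVec_sub, mulVec_smul, hA1, sub_dotProduct, dotProduct_sub, smul_dotProduct,
    dotProduct_smul, h1Ax, dotProduct_one, smul_eq_mul, Pi.sub_apply, Pi.smul_apply, Pi.one_apply,
    mul_one, sum_sub_distrib, sum_const, card_univ, nsmul_eq_mul]
  ring

lemma OrthonormalBasis.dotProduct_eq_sum_repr_mul {ι : Type*} [Fintype ι]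
    (b : OrthonormalBasis ι ℝ (EuclideanSpace ℝ V)) (x y : V → ℝ) :
    x ⬝ᵥ y = ∑ i, b.repr (WithLp.toLp 2 x) i * b.repr (WithLp.toLp 2 y) i := by
  have h := b.repr.inner_map_map (WithLp.toLp 2 y) (WithLp.toLp 2 x)
  simp only [PiLp.inner_apply, RCLike.inner_apply, conj_trivial] at h
  simpa [dotProduct] using h.symm

variable [DecidableEq V]

lemma dotProduct_mulVec_ite_mem (A : Matrix V V ℝ) (S : Finset V) (a : ℝ) :
    (fun v => if v ∈ S then a else 0) ⬝ᵥ (A *ᵥ fun v => if v ∈ S then a else 0)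
      = a ^ 2 * ∑ u ∈ S, ∑ v ∈ S, A u v := by
  simp [dotProduct, mulVec, mul_ite, mul_sum, sq, mul_comm, mul_left_comm]

def centeredIndicator (S : Finset V) : V → ℝ :=
  (fun v => if v ∈ S then (Fintype.card V : ℝ) else 0) - (#S : ℝ) • 1

lemma sum_centeredIndicator (S : Finset V) : ∑ v, centeredIndicator S v = 0 := by
  simp only [centeredIndicator, Pi.sub_apply, Pi.smul_apply, Pi.one_apply, smul_eq_mul, mul_one,
    sum_sub_distrib, sum_ite_mem, univ_inter, sum_const, nsmul_eq_mul, card_univ]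
  ring

lemma centeredIndicator_dotProduct_self (S : Finset V) :
    centeredIndicator S ⬝ᵥ centeredIndicator S
      = Fintype.card V * #S * (Fintype.card V - #S) := by
  have h := (isSymm_one (α := ℝ) (n := V)).dotProduct_mulVec_sub_smul_one (r := 1)
    (by simp [one_apply]) (fun v => if v ∈ S then (Fintype.card V : ℝ) else 0) #S
  rw [one_mulVec, one_mulVec] at h
  rw [centeredIndicator, h]
  simp only [dotProduct, mul_ite, ite_mul, zero_mul, mul_zero, sum_ite_mem, univ_inter,
    inter_self, sum_const, nsmul_eq_mul, mul_one]
  ring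

lemma Matrix.IsSymm.centeredIndicator_dotProduct_mulVec {A : Matrix V V ℝ} (hA : A.IsSymm)
    {r : ℝ} (hrow : ∀ u, ∑ v, A u v = r) (S : Finset V) :
    centeredIndicator S ⬝ᵥ (A *ᵥ centeredIndicator S)
      = Fintype.card V ^ 2 * ∑ u ∈ S, ∑ v ∈ S, A u v - Fintype.card V * #S ^ 2 * r := by
  rw [centeredIndicator, hA.dotProduct_mulVec_sub_smul_one hrow, dotProduct_mulVec_ite_mem]
  simp only [sum_ite_mem, univ_inter, sum_const, nsmul_eq_mul]
  ring

namespace Matrix.IsHermitian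

variable {A : Matrix V V ℝ}

lemma repr_mulVec (hA : A.IsHermitian) (y : V → ℝ) (v : V) :
    hA.eigenvectorBasis.repr (WithLp.toLp 2 (A *ᵥ y)) v
      = hA.eigenvalues v * hA.eigenvectorBasis.repr (WithLp.toLp 2 y) v := by
  have hsymm := isSymmetric_toEuclideanLin_iff.mpr hA (hA.eigenvectorBasis v) (WithLp.toLp 2 y)
  rw [OrthonormalBasis.repr_apply_apply, OrthonormalBasis.repr_apply_apply]
  simp only [toLpLin_apply] at hsymm
  rw [← hsymm, hA.mulVec_eigenvectorBasis]
  simp [inner_smul_left]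

lemma dotProduct_mulVec_eq_sum (hA : A.IsHermitian) (y : V → ℝ) :
    y ⬝ᵥ (A *ᵥ y)
      = ∑ v, hA.eigenvalues v * hA.eigenvectorBasis.repr (WithLp.toLp 2 y) v ^ 2 := by
  rw [hA.eigenvectorBasis.dotProduct_eq_sum_repr_mul]
  exact sum_congr rfl fun v _ => by rw [hA.repr_mulVec]; ring

lemma dotProduct_mulVec_le (hA : A.IsHermitian) {y : V → ℝ} {m : ℝ}
    (hm : ∀ v, hA.eigenvectorBasis.repr (WithLp.toLp 2 y) v ≠ 0 → hA.eigenvalues v ≤ m) :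
    y ⬝ᵥ (A *ᵥ y) ≤ m * (y ⬝ᵥ y) := by
  rw [hA.dotProduct_mulVec_eq_sum, hA.eigenvectorBasis.dotProduct_eq_sum_repr_mul, mul_sum]
  refine sum_le_sum fun v _ => ?_
  by_cases hv : hA.eigenvectorBasis.repr (WithLp.toLp 2 y) v = 0
  · simp [hv]
  · nlinarith [hm v hv, sq_nonneg (hA.eigenvectorBasis.repr (WithLp.toLp 2 y) v)]

lemma le_dotProduct_mulVec (hA : A.IsHermitian) (y : V → ℝ) {m : ℝ}
    (hm : ∀ v, m ≤ hA.eigenvalues v) :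
    m * (y ⬝ᵥ y) ≤ y ⬝ᵥ (A *ᵥ y) := by
  rw [hA.dotProduct_mulVec_eq_sum, hA.eigenvectorBasis.dotProduct_eq_sum_repr_mul, mul_sum]
  exact sum_le_sum fun v _ => by
    nlinarith [hm v, sq_nonneg (hA.eigenvectorBasis.repr (WithLp.toLp 2 y) v)]

lemma eigenvalues_le_of_nonneg_of_row_sum_eq (hA : A.IsHermitian) (hpos : ∀ u v, 0 ≤ A u v)
    {r : ℝ} (hrow : ∀ u, ∑ v, A u v = r) (v : V) : hA.eigenvalues v ≤ r := by
  have hμ : Module.End.HasEigenvalue (toLin' A) (hA.eigenvalues v) := by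
    rw [Module.End.hasEigenvalue_iff_mem_spectrum, spectrum_toLin']
    exact hA.eigenvalues_mem_spectrum_real v
  obtain ⟨k, hk⟩ := eigenvalue_mem_ball hμ
  rw [Metric.mem_closedBall, Real.dist_eq] at hk
  have hsum : A k k + ∑ j ∈ univ.erase k, ‖A k j‖ = r := by
    simp only [Real.norm_eq_abs, abs_of_nonneg (hpos k _), add_sum_erase _ _ (mem_univ k), hrow]
  linarith [le_abs_self (hA.eigenvalues v - A k k)]

lemma eigenvalues_eq_of_repr_one_ne_zero (hA : A.IsHermitian) {r : ℝ}
    (hrow : ∀ u, ∑ v, A u v = r) {v : V}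
    (hv : hA.eigenvectorBasis.repr (WithLp.toLp 2 1) v ≠ 0) : hA.eigenvalues v = r := by
  have h := hA.repr_mulVec 1 v
  rw [mulVec_one_eq_smul_one hrow, WithLp.toLp_smul, map_smul, PiLp.smul_apply, smul_eq_mul] at h
  exact (mul_right_cancel₀ hv h).symm

lemma dotProduct_mulVec_le_of_sum_eq_zero (hA : A.IsHermitian) (hpos : ∀ u v, 0 ≤ A u v)
    {r : ℝ} (hrow : ∀ u, ∑ v, A u v = r) (v₀ : V) {m : ℝ}
    (hm : ∀ v ≠ v₀, hA.eigenvalues v ≤ m) {y : V → ℝ} (hy : ∑ v, y v = 0) :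
    y ⬝ᵥ (A *ᵥ y) ≤ m * (y ⬝ᵥ y) := by
  refine hA.dotProduct_mulVec_le fun v hv => ?_
  rcases ne_or_eq v v₀ with hvv | rfl
  · exact hm v hvv
  -- If `λ v` exceeded `m`, the row sum `r` would be a simple eigenvalue with eigenvector
  -- proportional to `1`, so `y ⊥ 1` would have no component along it.
  by_contra! hlt
  set c := hA.eigenvectorBasis.repr
  have hone : ∀ w ≠ v, c (WithLp.toLp 2 1) w = 0 := fun w hw => by
    by_contra h
    linarith [hA.eigenvalues_eq_of_repr_one_ne_zero hrow h, hm w hw,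
      hA.eigenvalues_le_of_nonneg_of_row_sum_eq hpos hrow v]
  have hsum (z : V → ℝ) : 1 ⬝ᵥ z = c (WithLp.toLp 2 1) v * c (WithLp.toLp 2 z) v := by
    rw [hA.eigenvectorBasis.dotProduct_eq_sum_repr_mul,
      sum_eq_single v (fun w _ hw => by rw [hone w hw, zero_mul]) (by simp)]
  have hc1 : c (WithLp.toLp 2 1) v ≠ 0 := by
    intro h0
    have h11 := hsum 1
    rw [h0, zero_mul, one_dotProduct] at h11
    simp only [Pi.one_apply, sum_const, card_univ, nsmul_eq_mul, mul_one, Nat.cast_eq_zero] at h11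
    exact (Fintype.card_pos_iff.mpr ⟨v⟩).ne' h11
  have hy' := hsum y
  rw [one_dotProduct, hy] at hy'
  exact mul_ne_zero hc1 hv hy'.symm

end Matrix.IsHermitian

end LinearAlgebra

section DistanceMatrix

variable {V : Type*} (G : SimpleGraph V)

lemma distMatrix_isSymm : (distMatrix G).IsSymm :=
  IsSymm.ext fun u v => by simp [distMatrix, dist_comm]

lemma distMatrix_nonneg (u v : V) : 0 ≤ distMatrix G u v := by
  simp [distMatrix]

lemma IsEquidistantSet.sum_sum_distMatrix [DecidableEq V] {t : ℕ} {S : Finset V}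
    (hS : IsEquidistantSet G t S) :
    ∑ u ∈ S, ∑ v ∈ S, distMatrix G u v = t * #S * (#S - 1) := by
  have hrow : ∀ u ∈ S, ∑ v ∈ S, distMatrix G u v = t * (#S - 1) := fun u hu => by
    rw [← sum_erase_add S _ hu, sum_congr rfl fun v hv => show distMatrix G u v = t by
      simp [distMatrix, hS hu (mem_of_mem_erase hv) (ne_of_mem_erase hv).symm]]
    simp [distMatrix, card_erase_of_mem hu, Nat.cast_pred (card_pos.mpr ⟨u, hu⟩), mul_comm]
  rw [sum_congr rfl hrow, sum_const, nsmul_eq_mul]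
  ring

variable [Fintype V] {G}

lemma sum_distMatrix_eq {d : ℕ} (htr : ∀ u : V, ∑ v : V, G.dist u v = d) (u : V) :
    ∑ v, distMatrix G u v = d := by
  simp [distMatrix, ← Nat.cast_sum, htr]

end DistanceMatrix

section

variable {V : Type*} [Fintype V]

lemma bddAbove_card_isEquidistantSet (G : SimpleGraph V) (t : ℕ) :
    BddAbove {n | ∃ S : Finset V, IsEquidistantSet G t S ∧ #S = n} :=
  ⟨Fintype.card V, by rintro _ ⟨S, -, rfl⟩; exact card_le_univ S⟩

lemma exists_isEquidistantSet_card_eq_eqNum (G : SimpleGraph V) (t : ℕ) :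
    ∃ S : Finset V, IsEquidistantSet G t S ∧ #S = eqNum G t := by
  refine Nat.sSup_mem ?_ (bddAbove_card_isEquidistantSet G t)
  exact ⟨0, ∅, by simp [IsEquidistantSet], rfl⟩

lemma one_le_eqNum [Nonempty V] (G : SimpleGraph V) (t : ℕ) : 1 ≤ eqNum G t :=
  le_csSup (bddAbove_card_isEquidistantSet G t)
    ⟨{Classical.arbitrary V}, by simp [IsEquidistantSet], card_singleton _⟩

variable [DecidableEq V]

namespace IsEquidistantSet

variable {G : SimpleGraph V} {t d : ℕ} {S : Finset V}

lemma centeredIndicator_dotProduct_mulVec (hS : IsEquidistantSet G t S)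
    (htr : ∀ u : V, ∑ v : V, G.dist u v = d) :
    centeredIndicator S ⬝ᵥ (distMatrix G *ᵥ centeredIndicator S)
      = Fintype.card V * #S * (Fintype.card V * t * (#S - 1) - #S * d) := by
  rw [(distMatrix_isSymm G).centeredIndicator_dotProduct_mulVec (sum_distMatrix_eq htr),
    hS.sum_sum_distMatrix]
  ring

lemma mul_sub_le_of_eigenvalues_le (hS : IsEquidistantSet G t S) (hne : S.Nonempty)
    (htr : ∀ u : V, ∑ v : V, G.dist u v = d) (hD : (distMatrix G).IsHermitian) (v₀ : V)
    {m : ℝ} (hm : ∀ v ≠ v₀, hD.eigenvalues v ≤ m) :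
    (Fintype.card V : ℝ) * t * (#S - 1) - #S * d ≤ m * (Fintype.card V - #S) := by
  have key := hD.dotProduct_mulVec_le_of_sum_eq_zero (distMatrix_nonneg G) (sum_distMatrix_eq htr)
    v₀ hm (sum_centeredIndicator S)
  rw [hS.centeredIndicator_dotProduct_mulVec htr, centeredIndicator_dotProduct_self] at key
  have := hne.to_type
  have hpos : (0 : ℝ) < Fintype.card V * #S := by have := hne.card_pos; positivity
  exact le_of_mul_le_mul_left (by linear_combination key) hpos

lemma le_mul_sub_of_le_eigenvalues (hS : IsEquidistantSet G t S) (hne : S.Nonempty)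
    (htr : ∀ u : V, ∑ v : V, G.dist u v = d) (hD : (distMatrix G).IsHermitian)
    {m : ℝ} (hm : ∀ v, m ≤ hD.eigenvalues v) :
    m * (Fintype.card V - #S) ≤ (Fintype.card V : ℝ) * t * (#S - 1) - #S * d := by
  have key := hD.le_dotProduct_mulVec (centeredIndicator S) hm
  rw [hS.centeredIndicator_dotProduct_mulVec htr, centeredIndicator_dotProduct_self] at key
  have := hne.to_type
  have hpos : (0 : ℝ) < Fintype.card V * #S := by have := hne.card_pos; positivity
  exact le_of_mul_le_mul_left (by linear_combination key) hpos

end IsEquidistantSet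

end

/-- Let `G` be a connected `d`-transmission-regular graph on `n ≥ 2`
vertices with distance matrix eigenvalues `λ̃_1 ≥ ⋯ ≥ λ̃_n`, and let `t ≥ 1`. If
`tn - d + λ̃_2 > 0` then `eq_t(G) ≤ (λ̃_2 + t)n/(tn - d + λ̃_2)`; if `tn - d + λ̃_n < 0`
then `eq_t(G) ≤ (λ̃_n + t)n/(tn - d + λ̃_n)`. -/
theorem eqNum_le_quotient_bounds {V : Type*} [Fintype V] [DecidableEq V]
    (G : SimpleGraph V)
    (n : ℕ) (hn : Fintype.card V = n) (hn2 : 2 ≤ n)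
    (d : ℕ) (htr : ∀ u : V, ∑ v : V, G.dist u v = d)
    (hD : (distMatrix G).IsHermitian)
    (lam : Fin n → ℝ) (hanti : Antitone lam)
    (hlist : ∃ e : Fin n ≃ V, ∀ i, lam i = hD.eigenvalues (e i))
    (t : ℕ) :
    ((0 : ℝ) < t * n - d + lam ⟨1, by omega⟩ →
      (eqNum G t : ℝ) ≤
        (lam ⟨1, by omega⟩ + t) * n / (t * n - d + lam ⟨1, by omega⟩)) ∧
    ((t : ℝ) * n - d + lam ⟨n - 1, by omega⟩ < 0 →
      (eqNum G t : ℝ) ≤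
        (lam ⟨n - 1, by omega⟩ + t) * n / (t * n - d + lam ⟨n - 1, by omega⟩)) := by
  subst hn
  have : Nonempty V := Fintype.card_pos_iff.mp (by omega)
  obtain ⟨S, hS, hcard⟩ := exists_isEquidistantSet_card_eq_eqNum G t
  have hne : S.Nonempty := card_pos.mp (hcard ▸ one_le_eqNum G t)
  obtain ⟨e, he⟩ := hlist
  have hsecond : ∀ v ≠ e 0, hD.eigenvalues v ≤ lam ⟨1, by omega⟩ := fun v hv => by
    rw [← e.apply_symm_apply v, ← he]
    have h0 : e.symm v ≠ 0 := e.symm_apply_eq.not.mpr hv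
    exact hanti (Fin.le_def.mpr (Nat.one_le_iff_ne_zero.mpr (Fin.val_ne_iff.mpr h0)))
  have hlast : ∀ v, lam ⟨Fintype.card V - 1, by omega⟩ ≤ hD.eigenvalues v := fun v => by
    rw [← e.apply_symm_apply v, ← he]
    exact hanti (Fin.le_def.mpr (Nat.le_sub_one_of_lt (e.symm v).isLt))
  rw [← hcard]
  constructor
  · intro hpos
    rw [le_div_iff₀ hpos]
    linear_combination hS.mul_sub_le_of_eigenvalues_le hne htr hD (e 0) hsecond
  · intro hneg
    rw [le_div_iff_of_neg hneg]
    linear_combination hS.le_mul_sub_of_le_eigenvalues hne htr hD hlast
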